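/- arXiv:2310.07955 — 3 statements merged into one kernel-verified Lean document; each statement's English description precedes it below -/
import Mathlib

section
/- Let H be a real Hilbert space, W ⊆ H a finite-dimensional subspace, Π : H → H the orthogonal projection onto W, and S₀ : H × H → ℝ a symmetric bilinear form for which there are constants 0 < b₀ ≤ b₁ with b₀·‖u‖² ≤ S₀(u, u) ≤ b₁·‖u‖² for all u ∈ H. Define b_h(u, v) := ⟨Πu, Πv⟩ + S₀(u − Πu, v − Πv). Then: (i) min{b₀, 1}·‖v‖² ≤ b_h(v, v) ≤ max{b₁, 1}·‖v‖² for all v ∈ H (stability); and (ii) b_h(w, v) = ⟨w, v⟩ for all w ∈ W and v ∈ H (consistency). -/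
open RealInnerProductSpace

/-- Stability and consistency of the stabilized discrete `L²`-form
`b_h(u,v) = ⟨Πu, Πv⟩ + S₀(u − Πu, v − Πv)`, where `Π` is the orthogonal projection
onto a finite-dimensional subspace `W` and `S₀` is a symmetric bilinear form with
`b₀‖u‖² ≤ S₀(u,u) ≤ b₁‖u‖²`. -/
theorem stabilized_form_stability_and_consistency
    {H : Type*} [NormedAddCommGroup H] [InnerProductSpace ℝ H]
    (W : Submodule ℝ H) [FiniteDimensional ℝ W]
    (S0 : H →ₗ[ℝ] H →ₗ[ℝ] ℝ) (hS0_symm : ∀ u v : H, S0 u v = S0 v u)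
    (b0 b1 : ℝ) (hb0 : 0 < b0) (hb01 : b0 ≤ b1)
    (hS0_low : ∀ u : H, b0 * ‖u‖ ^ 2 ≤ S0 u u)
    (hS0_high : ∀ u : H, S0 u u ≤ b1 * ‖u‖ ^ 2)
    (bh : H → H → ℝ)
    (hbh : ∀ u v : H, bh u v =
      ⟪(W.orthogonalProjectionOnto u : H), (W.orthogonalProjectionOnto v : H)⟫ +
        S0 (u - (W.orthogonalProjectionOnto u : H)) (v - (W.orthogonalProjectionOnto v : H))) :
    (∀ v : H, min b0 1 * ‖v‖ ^ 2 ≤ bh v v ∧ bh v v ≤ max b1 1 * ‖v‖ ^ 2) ∧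
      (∀ w ∈ W, ∀ v : H, bh w v = ⟪w, v⟫) := by

  have key : ∀ v : H, ‖v‖ ^ 2 =
      ‖(W.orthogonalProjectionOnto v : H)‖ ^ 2 + ‖v - (W.orthogonalProjectionOnto v : H)‖ ^ 2 := by
    intro v
    have hmem : v - (W.orthogonalProjectionOnto v : H) ∈ Wᗮ :=
      W.sub_starProjection_mem_orthogonal v
    have horth : ⟪(W.orthogonalProjectionOnto v : H), v - (W.orthogonalProjectionOnto v : H)⟫ = 0 :=
      (hmem _ (W.orthogonalProjectionOnto v).2).symm ▸ rfl
    have hv : v = (W.orthogonalProjectionOnto v : H) + (v - (W.orthogonalProjectionOnto v : H)) := by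
      abel
    calc ‖v‖ ^ 2 = ‖(W.orthogonalProjectionOnto v : H) + (v - (W.orthogonalProjectionOnto v : H))‖ ^ 2 := by
          rw [← hv]
      _ = ‖(W.orthogonalProjectionOnto v : H)‖ ^ 2 + ‖v - (W.orthogonalProjectionOnto v : H)‖ ^ 2 := by
          rw [norm_add_sq_real, horth]; ring
  constructor
  · intro v
    rw [hbh]
    set p := (W.orthogonalProjectionOnto v : H)
    have h1 : ⟪p, p⟫ = ‖p‖ ^ 2 := real_inner_self_eq_norm_sq p
    have hlow := hS0_low (v - p)
    have hhigh := hS0_high (v - p)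
    have hk := key v
    constructor
    · have hmin0 : min b0 1 ≤ 1 := min_le_right _ _
      have hminb : min b0 1 ≤ b0 := min_le_left _ _
      nlinarith [sq_nonneg ‖p‖, sq_nonneg ‖v - p‖]
    · have hmax1 : (1:ℝ) ≤ max b1 1 := le_max_right _ _
      have hmaxb : b1 ≤ max b1 1 := le_max_left _ _
      nlinarith [sq_nonneg ‖p‖, sq_nonneg ‖v - p‖]
  · intro w hw v
    rw [hbh]
    have hp : (W.orthogonalProjectionOnto w : H) = w := by
      exact W.starProjection_eq_self_iff.2 hw
    rw [hp, sub_self, map_zero, LinearMap.zero_apply, add_zero]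
    have hmem : v - (W.orthogonalProjectionOnto v : H) ∈ Wᗮ :=
      W.sub_starProjection_mem_orthogonal v
    have : ⟪w, v - (W.orthogonalProjectionOnto v : H)⟫ = 0 := by
      exact hmem w hw
    have := inner_sub_right (𝕜 := ℝ) w v (W.orthogonalProjectionOnto v : H)
    linarith [this]
end

section
/- Let X be a real vector space, â and b symmetric bilinear forms on X, and â_h and b_h bilinear forms on X. Let λ, λ_h ∈ ℝ and p, p_h ∈ X be such that â(p, v) = λ·b(p, v) for all v ∈ X, and â_h(p_h, p_h) = λ_h·b_h(p_h, p_h). Then (λ_h − λ)·b(p_h, p_h) = [â(p − p_h, p − p_h) − λ·b(p − p_h, p − p_h)] + [â_h(p_h, p_h) − â(p_h, p_h)] + λ_h·[b(p_h, p_h) − b_h(p_h, p_h)]. -/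
/-! Because `â` and `b` are symmetric, `p` lies in the kernel of `â − λ b` on both sides, so
`(â − λ b)(p − p_h, p − p_h) = (â − λ b)(p_h, p_h)`; the identity is then a rearrangement
using the discrete eigen-equation. -/

theorem LinearMap.apply_sub_sub_of_forall_eq_zero {R M N : Type*} [CommRing R]
    [AddCommGroup M] [Module R M] [AddCommGroup N] [Module R N]
    (c : M →ₗ[R] M →ₗ[R] N) {p : M} (hleft : ∀ v, c p v = 0) (hright : ∀ v, c v p = 0)
    (x : M) : c (p - x) (p - x) = c x x := by
  simp only [map_sub, LinearMap.sub_apply, hleft, hright]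
  abel

/-- The algebraic identity behind the double order of convergence:
if `â(p,v) = λ b(p,v)` for all `v` and `â_h(p_h,p_h) = λ_h b_h(p_h,p_h)`, then
`(λ_h − λ)·b(p_h,p_h) = [â(p−p_h,p−p_h) − λ b(p−p_h,p−p_h)]
  + [â_h(p_h,p_h) − â(p_h,p_h)] + λ_h[b(p_h,p_h) − b_h(p_h,p_h)]`. -/
theorem eigenvalue_error_identity
    {X : Type*} [AddCommGroup X] [Module ℝ X]
    (ahat b ahath bh : X →ₗ[ℝ] X →ₗ[ℝ] ℝ)
    (hahat_symm : ∀ u v : X, ahat u v = ahat v u)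
    (hb_symm : ∀ u v : X, b u v = b v u)
    (lam lamh : ℝ) (p ph : X)
    (hp : ∀ v : X, ahat p v = lam * b p v)
    (hph : ahath ph ph = lamh * bh ph ph) :
    (lamh - lam) * b ph ph =
      (ahat (p - ph) (p - ph) - lam * b (p - ph) (p - ph)) +
        (ahath ph ph - ahat ph ph) + lamh * (b ph ph - bh ph ph) := by
  have hleft : ∀ v, (ahat - lam • b) p v = 0 := fun v => by simp [hp]
  have hright : ∀ v, (ahat - lam • b) v p = 0 := fun v => by
    simp [hahat_symm v, hb_symm v, hp]
  have hcross := (ahat - lam • b).apply_sub_sub_of_forall_eq_zero hleft hright ph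
  simp only [LinearMap.sub_apply, LinearMap.smul_apply, smul_eq_mul] at hcross
  linear_combination -hph - hcross
end

section
/- Let X be a real vector space, â a symmetric bilinear form on X, b a bilinear form on X, â_h a symmetric bilinear form on X, and b_h a bilinear form on X. Let p̃, p̃_h, q, q_I, f, g ∈ X satisfy: â(q, v) = b(p̃ − p̃_h, v) for all v ∈ X; â(p̃, v) = b(f, v) for all v ∈ X; and â_h(p̃_h, q_I) = b_h(g, q_I). Then b(p̃ − p̃_h, p̃ − p̃_h) = â(q − q_I, p̃ − p̃_h) + [b(f, q_I) − b_h(g, q_I)] + [â_h(q_I, p̃_h) − â(q_I, p̃_h)]. -/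
/-- The algebraic decomposition behind the Aubin–Nitsche duality
argument for the `L²` error estimate:
`b(p̃−p̃_h, p̃−p̃_h) = â(q−q_I, p̃−p̃_h) + [b(f,q_I) − b_h(g,q_I)]
  + [â_h(q_I, p̃_h) − â(q_I, p̃_h)]`. -/
theorem duality_argument_identity
    {X : Type*} [AddCommGroup X] [Module ℝ X]
    (ahat b ahath bh : X →ₗ[ℝ] X →ₗ[ℝ] ℝ)
    (hahat_symm : ∀ u v : X, ahat u v = ahat v u)
    (hahath_symm : ∀ u v : X, ahath u v = ahath v u)
    (ptil ptilh q qI f g : X)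
    (hdual : ∀ v : X, ahat q v = b (ptil - ptilh) v)
    (hsource : ∀ v : X, ahat ptil v = b f v)
    (hdisc : ahath ptilh qI = bh g qI) :
    b (ptil - ptilh) (ptil - ptilh) =
      ahat (q - qI) (ptil - ptilh) + (b f qI - bh g qI) +
        (ahath qI ptilh - ahat qI ptilh) := by
  calc b (ptil - ptilh) (ptil - ptilh)
      = ahat q (ptil - ptilh) := (hdual _).symm
    _ = ahat (q - qI) (ptil - ptilh) + ahat qI ptil - ahat qI ptilh := by
        simp only [map_sub, LinearMap.sub_apply]; ring
    _ = ahat (q - qI) (ptil - ptilh) + (b f qI - bh g qI) +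
          (ahath qI ptilh - ahat qI ptilh) := by
        rw [hahat_symm qI ptil, hsource, hahath_symm qI ptilh, hdisc]; ring
end
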